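/- Let X be a normed space, F ⊆ X a bounded convex set with 0 ∈ int(F), and Ω ⊆ X nonempty. Then T_Ω^F is Lipschitz continuous on X with constant ‖F°‖ := sup{‖x*‖ | x* ∈ F°}, where F° := {x* ∈ X* | ⟨x*, x⟩ ≤ 1 for all x ∈ F} is the polar of F. -/

import Mathlib

open Set Filter Topology Pointwise

/-- The set of admissible times in the definition of the minimal time function. -/
def timeSet {X : Type*} [AddCommGroup X] [Module ℝ X] (F Ω : Set X) (x : X) : Set ℝ :=
  {t : ℝ | 0 < t ∧ ∃ f ∈ F, x + t • f ∈ Ω}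

/-- The minimal time function with target Ω and constant dynamics F. -/
noncomputable def minTime {X : Type*} [AddCommGroup X] [Module ℝ X] (F Ω : Set X) (x : X) : ℝ :=
  sInf (timeSet F Ω x)

/-! If `y - x ∈ c • F`, a time `t` steering `y` into `Ω` yields the time `t + c` steering `x`
into `Ω`, because `t • F + c • F = (t + c) • F` for convex `F`; hence `T(x) ≤ T(y) + c`.
By Hahn–Banach separation, `y - x ∈ c • closure F` as soon as `x' (y - x) ≤ c` for all `x' ∈ F°`,
which holds for `c = ‖F°‖ ‖x - y‖`, and `c • closure F ⊆ c' • F` for every `c' > c` because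
`0 ∈ interior F`. -/

section MinTime

variable {X : Type*} [AddCommGroup X] [Module ℝ X] {F Ω : Set X} {x y : X}

lemma mem_timeSet_iff {t : ℝ} : t ∈ timeSet F Ω x ↔ 0 < t ∧ ∃ ω ∈ Ω, ω - x ∈ t • F := by
  refine and_congr_right fun _ => ⟨?_, ?_⟩
  · rintro ⟨f, hf, hΩ⟩
    exact ⟨_, hΩ, f, hf, by abel⟩
  · rintro ⟨ω, hω, f, hf, hfω : t • f = ω - x⟩
    exact ⟨f, hf, by rwa [hfω, add_sub_cancel]⟩

lemma timeSet_nonempty (hF : Absorbent ℝ F) (hΩ : Ω.Nonempty) (x : X) :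
    (timeSet F Ω x).Nonempty := by
  obtain ⟨ω, hω⟩ := hΩ
  obtain ⟨t, ht, hωx⟩ := hF.gauge_set_nonempty (x := ω - x)
  exact ⟨t, mem_timeSet_iff.2 ⟨ht, ω, hω, hωx⟩⟩

lemma add_mem_timeSet_of_sub_mem_smul (hF : Convex ℝ F) {c t : ℝ} (hc : 0 ≤ c)
    (hxy : y - x ∈ c • F) (ht : t ∈ timeSet F Ω y) : t + c ∈ timeSet F Ω x := by
  obtain ⟨ht0, ω, hω, hωy⟩ := mem_timeSet_iff.1 ht
  refine mem_timeSet_iff.2 ⟨by positivity, ω, hω, ?_⟩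
  rw [hF.add_smul ht0.le hc, ← sub_add_sub_cancel ω y x]
  exact add_mem_add hωy hxy

lemma minTime_le_add_of_sub_mem_smul (hF : Convex ℝ F) (hy : (timeSet F Ω y).Nonempty)
    {c : ℝ} (hc : 0 ≤ c) (hxy : y - x ∈ c • F) : minTime F Ω x ≤ minTime F Ω y + c := by
  refine sub_le_iff_le_add.1 (le_csInf hy fun t ht => sub_le_iff_le_add.2 ?_)
  exact csInf_le ⟨0, fun _ hs => hs.1.le⟩ (add_mem_timeSet_of_sub_mem_smul hF hc hxy ht)

end MinTime

section Polar

variable {X : Type*} [AddCommGroup X] [Module ℝ X] [TopologicalSpace X] [IsTopologicalAddGroup X]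
  [ContinuousSMul ℝ X] {F : Set X}

lemma Convex.smul_closure_subset_smul_interior (hF : Convex ℝ F) (h0 : (0 : X) ∈ interior F)
    {a b : ℝ} (ha : 0 < a) (hab : a < b) : a • closure F ⊆ b • interior F := by
  have hhomothety : ⇑(AffineMap.homothety (0 : X) (b / a)) = ((b / a) • ·) :=
    funext fun p => by simp [AffineMap.homothety_apply]
  have hclosure : closure F ⊆ (b / a) • interior F := by
    simpa only [hhomothety, image_smul] using
      hF.closure_subset_image_homothety_interior_of_one_lt h0 (b / a) ((one_lt_div ha).2 hab)
  calc a • closure F ⊆ a • (b / a) • interior F := smul_set_mono hclosure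
    _ = b • interior F := by rw [smul_smul, mul_div_cancel₀ _ ha.ne']

lemma mem_smul_closure_of_forall_polar_le [LocallyConvexSpace ℝ X] (hF : Convex ℝ F)
    (h0 : (0 : X) ∈ closure F) {c : ℝ} (hc : 0 < c) {v : X}
    (hv : ∀ x' : X →L[ℝ] ℝ, (∀ f ∈ F, x' f ≤ 1) → x' v ≤ c) : v ∈ c • closure F := by
  rw [mem_smul_set_iff_inv_smul_mem₀ hc.ne']
  by_contra hvF
  obtain ⟨g, α, hgF, hgv⟩ := geometric_hahn_banach_closed_point hF.closure isClosed_closure hvF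
  have hα : 0 < α := by simpa using hgF 0 h0
  have hpolar : ∀ f ∈ F, (α⁻¹ • g) f ≤ 1 := fun f hf => by
    simpa [inv_mul_le_iff₀ hα] using (hgF f (subset_closure hf)).le
  have hgv_le := hv _ hpolar
  simp only [map_smul, smul_eq_mul, FunLike.coe_smul, Pi.smul_apply] at hgv_le hgv
  rw [inv_mul_le_iff₀ hα] at hgv_le
  rw [lt_inv_mul_iff₀ hc] at hgv
  linarith

end Polar

section Normed

variable {X : Type*} [NormedAddCommGroup X] [NormedSpace ℝ X] {F : Set X}

lemma norm_le_inv_of_ball_subset {r : ℝ} (hr : 0 < r) (hball : Metric.ball 0 r ⊆ F)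
    {x' : X →L[ℝ] ℝ} (hx' : ∀ f ∈ F, x' f ≤ 1) : ‖x'‖ ≤ r⁻¹ := by
  have hpolar : x' ∈ StrongDual.polar ℝ (Metric.ball (0 : X) r) := by
    refine (StrongDual.mem_polar_iff ℝ _).2 fun z hz => ?_
    have hneg := hx' (-z) (hball (by simpa using hz))
    rw [map_neg] at hneg
    exact abs_le.2 ⟨by linarith, hx' z (hball hz)⟩
  rwa [NormedSpace.polar_ball hr, mem_closedBall_zero_iff] at hpolar

noncomputable def polarNorm (F : Set X) : ℝ :=
  sSup {c : ℝ | ∃ x' : X →L[ℝ] ℝ, (∀ f ∈ F, x' f ≤ 1) ∧ c = ‖x'‖}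

lemma norm_le_polarNorm (h0 : (0 : X) ∈ interior F) {x' : X →L[ℝ] ℝ}
    (hx' : ∀ f ∈ F, x' f ≤ 1) : ‖x'‖ ≤ polarNorm F := by
  obtain ⟨r, hr, hball⟩ := Metric.mem_nhds_iff.1 (mem_interior_iff_mem_nhds.1 h0)
  refine le_csSup ⟨r⁻¹, ?_⟩ ⟨x', hx', rfl⟩
  rintro _ ⟨y', hy', rfl⟩
  exact norm_le_inv_of_ball_subset hr hball hy'

lemma polarNorm_nonneg (h0 : (0 : X) ∈ interior F) : 0 ≤ polarNorm F :=
  (norm_nonneg _).trans (norm_le_polarNorm h0 (x' := 0) (by simp))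

lemma minTime_le_add_polarNorm_mul (hF : Convex ℝ F) (h0 : (0 : X) ∈ interior F)
    {Ω : Set X} (hΩ : Ω.Nonempty) (x y : X) :
    minTime F Ω x ≤ minTime F Ω y + polarNorm F * ‖x - y‖ := by
  rw [← sub_le_iff_le_add']
  refine le_of_forall_gt_imp_ge_of_dense fun c hc => ?_
  obtain ⟨c', hc'_gt, hc'_lt⟩ := exists_between hc
  have hc' : 0 < c' := (mul_nonneg (polarNorm_nonneg h0) (norm_nonneg _)).trans_lt hc'_gt
  have hyx : y - x ∈ c' • closure F := by
    refine mem_smul_closure_of_forall_polar_le hF (subset_closure (interior_subset h0)) hc'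
      fun x' hx' => ?_
    calc x' (y - x) ≤ ‖x'‖ * ‖y - x‖ := (le_abs_self _).trans (x'.le_opNorm _)
      _ ≤ polarNorm F * ‖x - y‖ := by rw [norm_sub_rev]; gcongr; exact norm_le_polarNorm h0 hx'
      _ ≤ c' := hc'_gt.le
  have hyx' : y - x ∈ c • F :=
    smul_set_mono interior_subset (hF.smul_closure_subset_smul_interior h0 hc' hc'_lt hyx)
  have hF_absorbent : Absorbent ℝ F := absorbent_nhds_zero (mem_interior_iff_mem_nhds.1 h0)
  have := minTime_le_add_of_sub_mem_smul hF (timeSet_nonempty hF_absorbent hΩ y)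
    (hc'.trans hc'_lt).le hyx'
  linarith

end Normed

theorem minTime_lipschitz_general {X : Type*} [NormedAddCommGroup X] [NormedSpace ℝ X]
    (F Ω : Set X) (hconv : Convex ℝ F) (h0 : (0 : X) ∈ interior F)
    (hΩ : Ω.Nonempty) :
    ∀ x y : X, |minTime F Ω x - minTime F Ω y| ≤
      sSup {c : ℝ | ∃ x' : X →L[ℝ] ℝ, (∀ f ∈ F, x' f ≤ 1) ∧ c = ‖x'‖} * ‖x - y‖ := by
  intro x y
  change _ ≤ polarNorm F * ‖x - y‖
  have hxy := minTime_le_add_polarNorm_mul hconv h0 hΩ x y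
  have hyx := minTime_le_add_polarNorm_mul hconv h0 hΩ y x
  rw [norm_sub_rev y x] at hyx
  exact abs_sub_le_iff.2 ⟨by linarith, by linarith⟩

/-- In a normed space with bounded convex dynamics F, the minimal time function is
Lipschitz continuous with constant ‖F°‖, the supremum of the norms of elements of
the polar of F. -/
theorem minTime_lipschitz {X : Type*} [NormedAddCommGroup X] [NormedSpace ℝ X]
    (F Ω : Set X) (hconv : Convex ℝ F) (h0 : (0 : X) ∈ interior F)
    (hFbd : Bornology.IsBounded F) (hΩ : Ω.Nonempty) :
    ∀ x y : X, |minTime F Ω x - minTime F Ω y| ≤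
      sSup {c : ℝ | ∃ x' : X →L[ℝ] ℝ, (∀ f ∈ F, x' f ≤ 1) ∧ c = ‖x'‖} * ‖x - y‖ :=
  minTime_lipschitz_general F Ω hconv h0 hΩ
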